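/- Let κ > 0, α > 0 and δ < 0. With μ₀(x₁) = −(ακ)^{−1/α}(x₁ + x̂₁)^{−1/α}, x̂₁ = (ακ)⁻¹|δ|⁻ᵅ, and ℓ_ε = ∫_δ^0 ds/(κ|s|^{1+α} + ε) for ε > 0, one has lim_{ε→0⁺} ε / (κ(−μ₀(ℓ_ε))^{1+α}) = [ α · (π/(α+1))/sin(π/(α+1)) ]^{(α+1)/α}. In particular the ratio G_ε(ℓ_ε) = H_ε(μ_ε(ℓ_ε⁻)) / H₀(μ₀(ℓ_ε)) = ε / H₀(μ₀(ℓ_ε)) stays bounded as ε → 0⁺. -/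

import Mathlib

open Set MeasureTheory Real Filter Topology

/-!
With `p = 1 + α`, the substitution `s = -(ε / κ) ^ (1 / p) t` turns `ℓ_ε` into
`(ε / κ) ^ (1 / p) ε⁻¹ ∫₀^T dt / (1 + t ^ p)` with `T = |δ| (κ / ε) ^ (1 / p)`, and the powers of
`ε` in `ε / H₀(μ₀(ℓ_ε))` then cancel exactly: the ratio equals `(α G_ε) ^ (p / α)` with
`G_ε = ∫₀^T dt / (1 + t ^ p) + κ ^ (1 / p) ε ^ (α / p) x̂`. As `ε → 0⁺`, `G_ε` tends to
`∫₀^∞ dt / (1 + t ^ p) = B(1 / p, 1 - 1 / p) / p = (π / p) / sin (π / p)` by Euler's reflection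
formula.
-/

theorem integral_rpow_mul_one_sub_rpow_neg {s : ℝ} (hs₀ : 0 < s) (hs₁ : s < 1) :
    ∫ x in (0 : ℝ)..1, x ^ (s - 1) * (1 - x) ^ (-s) = π / sin (π * s) := by
  have hGamma : Complex.betaIntegral s (1 - s : ℝ) = (π / sin (π * s) : ℝ) := by
    have h := Complex.Gamma_mul_Gamma_eq_betaIntegral (s := s) (t := (1 - s : ℝ))
      (by simpa using hs₀) (by simpa using hs₁)
    rw [show (s : ℂ) + (1 - s : ℝ) = 1 by push_cast; ring, Complex.Gamma_one, one_mul] at h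
    rw [← h, Complex.Gamma_ofReal, Complex.Gamma_ofReal, ← Complex.ofReal_mul,
      Real.Gamma_mul_Gamma_one_sub]
  have hreal : Complex.betaIntegral s (1 - s : ℝ)
      = (∫ x in (0 : ℝ)..1, x ^ (s - 1) * (1 - x) ^ (-s) : ℝ) := by
    rw [Complex.betaIntegral, ← intervalIntegral.integral_ofReal]
    refine intervalIntegral.integral_congr fun x hx => ?_
    rw [uIcc_of_le zero_le_one] at hx
    show _ = ((x ^ (s - 1) * (1 - x) ^ (-s) : ℝ) : ℂ)
    rw [Complex.ofReal_mul, Complex.ofReal_cpow hx.1, Complex.ofReal_cpow (by linarith [hx.2])]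
    push_cast
    ring_nf
  exact_mod_cast hreal.symm.trans hGamma

theorem image_div_one_sub_Ioo : (fun x : ℝ => x / (1 - x)) '' Ioo 0 1 = Ioi 0 := by
  ext y
  constructor
  · rintro ⟨x, ⟨hx₀, hx₁⟩, rfl⟩
    exact div_pos hx₀ (by linarith)
  · intro (hy : 0 < y)
    refine ⟨y / (1 + y), ⟨by positivity, by rw [div_lt_one (by linarith)]; linarith⟩, ?_⟩
    field_simp
    ring

theorem integral_Ioi_rpow_mul_inv_one_add {s : ℝ} (hs₀ : 0 < s) (hs₁ : s < 1) :
    ∫ y in Ioi (0 : ℝ), y ^ (s - 1) * (1 + y)⁻¹ = π / sin (π * s) := by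
  have hderiv : ∀ x ∈ Ioo (0 : ℝ) 1,
      HasDerivWithinAt (fun x => x / (1 - x)) ((1 - x) ^ 2)⁻¹ (Ioo 0 1) x := by
    intro x ⟨_, hx₁⟩
    have h1x : 1 - x ≠ 0 := by linarith
    have h : HasDerivAt (fun x => x / (1 - x)) ((1 * (1 - x) - x * -1) / (1 - x) ^ 2) x :=
      (hasDerivAt_id' x).div ((hasDerivAt_id' x).const_sub 1) h1x
    rw [show (1 * (1 - x) - x * -1) / (1 - x) ^ 2 = ((1 - x) ^ 2)⁻¹ by field_simp; ring] at h
    exact h.hasDerivWithinAt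
  have hinj : InjOn (fun x : ℝ => x / (1 - x)) (Ioo 0 1) := by
    intro a ⟨_, ha₁⟩ b ⟨_, hb₁⟩ hab
    rw [div_eq_div_iff (by linarith) (by linarith)] at hab
    linarith
  rw [← image_div_one_sub_Ioo,
    integral_image_eq_integral_abs_deriv_smul measurableSet_Ioo hderiv hinj,
    ← integral_rpow_mul_one_sub_rpow_neg hs₀ hs₁,
    intervalIntegral.integral_of_le zero_le_one, integral_Ioc_eq_integral_Ioo]
  refine setIntegral_congr_fun measurableSet_Ioo fun x ⟨hx₀, hx₁⟩ => ?_
  have h1x : 0 < 1 - x := by linarith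
  rw [smul_eq_mul, abs_of_pos (by positivity), div_rpow hx₀.le h1x.le,
    show (1 - x) ^ (-s) = ((1 - x) ^ (s - 1))⁻¹ * (1 - x)⁻¹ by
      rw [← rpow_neg h1x.le, ← rpow_neg_one, ← rpow_add h1x]; ring_nf]
  have : (1 - x) ^ (s - 1) ≠ 0 := (rpow_pos_of_pos h1x _).ne'
  field_simp
  ring

theorem integral_Ioi_inv_one_add_rpow {p : ℝ} (hp : 1 < p) :
    ∫ t in Ioi (0 : ℝ), (1 + t ^ p)⁻¹ = (π / p) / sin (π / p) := by
  have hp₀ : 0 < p := by linarith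
  have key := integral_comp_rpow_Ioi (fun y => p⁻¹ * (y ^ (p⁻¹ - 1) * (1 + y)⁻¹)) hp₀.ne'
  rw [integral_const_mul, integral_Ioi_rpow_mul_inv_one_add (inv_pos.2 hp₀)
    (inv_lt_one_of_one_lt₀ hp)] at key
  rw [show (π / p) / sin (π / p) = p⁻¹ * (π / sin (π * p⁻¹)) by simp only [div_eq_mul_inv]; ring,
    ← key]
  refine setIntegral_congr_fun measurableSet_Ioi fun t (ht : 0 < t) => ?_
  rw [smul_eq_mul, abs_of_pos hp₀, ← rpow_mul ht.le,
    show p * (p⁻¹ - 1) = 1 - p by rw [mul_sub, mul_inv_cancel₀ hp₀.ne', mul_one]]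
  have : t ^ (p - 1) * t ^ (1 - p) = 1 := by
    rw [← rpow_add ht, show p - 1 + (1 - p) = 0 by ring, rpow_zero]
  calc (1 + t ^ p)⁻¹ = (p * p⁻¹) * (t ^ (p - 1) * t ^ (1 - p)) * (1 + t ^ p)⁻¹ := by
        rw [mul_inv_cancel₀ hp₀.ne', this, one_mul, one_mul]
    _ = p * t ^ (p - 1) * (p⁻¹ * (t ^ (1 - p) * (1 + t ^ p)⁻¹)) := by ring

theorem integrableOn_Ioi_inv_one_add_rpow {p : ℝ} (hp : 1 < p) :
    IntegrableOn (fun t : ℝ => (1 + t ^ p)⁻¹) (Ioi 0) := by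
  have hcont : ContinuousOn (fun t : ℝ => (1 + t ^ p)⁻¹) (Ici 0) := by
    refine (continuousOn_const.add fun x _ =>
      (continuousAt_rpow_const x p (Or.inr (by linarith))).continuousWithinAt).inv₀ ?_
    exact fun x (hx : 0 ≤ x) => (add_pos_of_pos_of_nonneg one_pos (rpow_nonneg hx p)).ne'
  have hnear : IntegrableOn (fun t : ℝ => (1 + t ^ p)⁻¹) (Ioc 0 1) :=
    (hcont.mono Icc_subset_Ici_self).integrableOn_Icc.mono_set Ioc_subset_Icc_self
  have hfar : IntegrableOn (fun t : ℝ => (1 + t ^ p)⁻¹) (Ioi 1) := by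
    refine (integrableOn_Ioi_rpow_of_lt (neg_lt_neg hp) one_pos).mono'
      ((hcont.mono fun x (hx : 1 < x) => (zero_lt_one.trans hx).le).aestronglyMeasurable
        measurableSet_Ioi) ?_
    filter_upwards [ae_restrict_mem measurableSet_Ioi] with t (ht : 1 < t)
    have htp : 0 < t ^ p := rpow_pos_of_pos (zero_lt_one.trans ht) _
    rw [norm_of_nonneg (by positivity), rpow_neg (zero_lt_one.trans ht).le]
    exact inv_anti₀ htp (by linarith)
  simpa only [Ioc_union_Ioi_eq_Ioi zero_le_one] using hnear.union hfar

/-- The length scale at which `κ |s| ^ p` and `ε` balance. -/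
noncomputable def innerScale (κ p ε : ℝ) : ℝ := (ε / κ) ^ p⁻¹

section innerScale

variable {κ p ε : ℝ}

theorem innerScale_pos (hκ : 0 < κ) (hε : 0 < ε) : 0 < innerScale κ p ε :=
  rpow_pos_of_pos (div_pos hε hκ) _

theorem innerScale_rpow (hκ : 0 < κ) (hp : p ≠ 0) (hε : 0 < ε) :
    innerScale κ p ε ^ p = ε / κ := by
  rw [innerScale, ← rpow_mul (div_pos hε hκ).le, inv_mul_cancel₀ hp, rpow_one]

theorem div_innerScale (hκ : 0 < κ) (hp : p ≠ 0) (hε : 0 < ε) :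
    ε / innerScale κ p ε = κ * innerScale κ p ε ^ (p - 1) := by
  have hs := innerScale_pos (p := p) hκ hε
  rw [rpow_sub hs, rpow_one, innerScale_rpow hκ hp hε]
  field_simp

theorem integral_one_div_mul_abs_rpow_add {δ : ℝ} (hκ : 0 < κ) (hp : p ≠ 0) (hδ : δ ≤ 0)
    (hε : 0 < ε) :
    ∫ s in δ..0, 1 / (κ * |s| ^ p + ε)
      = innerScale κ p ε / ε * ∫ t in (0 : ℝ)..(-δ / innerScale κ p ε), (1 + t ^ p)⁻¹ := by
  set c := innerScale κ p ε
  have hc : 0 < c := innerScale_pos hκ hε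
  have hflip := intervalIntegral.integral_comp_neg (a := 0) (b := -δ)
    fun s => 1 / (κ * |s| ^ p + ε)
  have hscale := intervalIntegral.smul_integral_comp_mul_left (a := 0) (b := -δ / c)
    (fun s => 1 / (κ * |s| ^ p + ε)) c
  simp only [abs_neg, neg_neg, neg_zero] at hflip
  rw [mul_zero, mul_div_cancel₀ _ hc.ne', smul_eq_mul] at hscale
  rw [← hflip, ← hscale, div_mul_eq_mul_div, mul_div_assoc, ← intervalIntegral.integral_div]
  congr 1
  refine intervalIntegral.integral_congr fun t ht => ?_
  rw [uIcc_of_le (div_nonneg (neg_nonneg.2 hδ) hc.le)] at ht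
  rw [abs_of_nonneg (mul_nonneg hc.le ht.1), mul_rpow hc.le ht.1, innerScale_rpow hκ hp hε]
  field_simp
  ring

theorem tendsto_innerScale (hκ : 0 < κ) (hp : 0 < p) :
    Tendsto (innerScale κ p) (𝓝[>] 0) (𝓝[>] 0) := by
  refine tendsto_nhdsWithin_of_tendsto_nhds_of_eventually_within _ ?_
    (eventually_nhdsWithin_of_forall fun ε hε => innerScale_pos hκ hε)
  have h := ((continuous_id.div_const κ).rpow_const fun _ => Or.inr (inv_pos.2 hp).le).tendsto 0
  rw [id, zero_div, zero_rpow (inv_pos.2 hp).ne'] at h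
  exact h.mono_left nhdsWithin_le_nhds

theorem tendsto_div_innerScale (hκ : 0 < κ) (hp : 1 < p) :
    Tendsto (fun ε => ε / innerScale κ p ε) (𝓝[>] 0) (𝓝 0) := by
  have hpow :
      Tendsto (fun ε => κ * innerScale κ p ε ^ (p - 1)) (𝓝[>] 0) (𝓝 (κ * 0 ^ (p - 1))) :=
    ((continuousAt_rpow_const 0 (p - 1) (Or.inr (by linarith))).tendsto.comp
      ((tendsto_innerScale hκ (by linarith)).mono_right nhdsWithin_le_nhds)).const_mul κ
  rw [zero_rpow (by linarith), mul_zero] at hpow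
  exact hpow.congr' (eventually_nhdsWithin_of_forall fun ε hε =>
    (div_innerScale hκ (by linarith) hε).symm)

theorem tendsto_const_div_innerScale_atTop {c : ℝ} (hκ : 0 < κ) (hp : 0 < p) (hc : 0 < c) :
    Tendsto (fun ε => c / innerScale κ p ε) (𝓝[>] 0) atTop := by
  simpa only [div_eq_mul_inv, Pi.inv_apply] using
    ((tendsto_innerScale hκ hp).inv_tendsto_nhdsGT_zero).const_mul_atTop hc

theorem div_mul_rpow_innerScale_eq {α G : ℝ} (hκ : 0 < κ) (hα : 0 < α) (hε : 0 < ε)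
    (hG : 0 < G) :
    ε / (κ * ((α * κ) ^ (-(1 / α)) * (innerScale κ (1 + α) ε / ε * G) ^ (-(1 / α))) ^ (1 + α))
      = (α * G) ^ ((1 + α) / α) := by
  set s := innerScale κ (1 + α) ε
  have hs : 0 < s := innerScale_pos hκ hε
  have hsε : s / ε = (κ * s ^ α)⁻¹ := by
    rw [← inv_div, div_innerScale hκ (by positivity) hε, add_sub_cancel_left]
  have hbase : α * κ * (s / ε * G) = α * G / s ^ α := by
    rw [hsε]
    field_simp
  rw [← mul_rpow (by positivity) (by positivity), hbase, ← rpow_mul (by positivity),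
    div_rpow (by positivity) (by positivity), ← rpow_mul hs.le,
    show α * (-(1 / α) * (1 + α)) = -(1 + α) by field_simp, rpow_neg hs.le,
    innerScale_rpow hκ (by positivity) hε, show -(1 / α) * (1 + α) = -((1 + α) / α) by ring,
    rpow_neg (by positivity)]
  field_simp

theorem div_mul_rpow_integral_add_eq {α δ x : ℝ} (hκ : 0 < κ) (hα : 0 < α) (hδ : δ ≤ 0)
    (hε : 0 < ε) (hx : 0 < x) :
    ε / (κ * ((α * κ) ^ (-(1 / α)) *
        ((∫ s in δ..0, 1 / (κ * |s| ^ (1 + α) + ε)) + x) ^ (-(1 / α))) ^ (1 + α))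
      = (α * ((∫ t in (0 : ℝ)..(-δ / innerScale κ (1 + α) ε), (1 + t ^ (1 + α))⁻¹)
          + ε / innerScale κ (1 + α) ε * x)) ^ ((1 + α) / α) := by
  have hc : 0 < innerScale κ (1 + α) ε := innerScale_pos hκ hε
  have hF : 0 ≤ ∫ t in (0 : ℝ)..(-δ / innerScale κ (1 + α) ε), (1 + t ^ (1 + α))⁻¹ :=
    intervalIntegral.integral_nonneg (div_nonneg (neg_nonneg.2 hδ) hc.le)
      fun t ht => inv_nonneg.2 (add_nonneg zero_le_one (rpow_nonneg ht.1 _))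
  rw [integral_one_div_mul_abs_rpow_add hκ (by positivity) hδ hε,
    ← div_mul_rpow_innerScale_eq hκ hα hε (add_pos_of_nonneg_of_pos hF (by positivity))]
  congr 5
  field_simp

end innerScale

theorem tendsto_intervalIntegral_inv_one_add_rpow {ι : Type*} {l : Filter ι}
    [l.IsCountablyGenerated] {T : ι → ℝ}
    {p : ℝ} (hp : 1 < p) (hT : Tendsto T l atTop) :
    Tendsto (fun i => ∫ t in (0 : ℝ)..T i, (1 + t ^ p)⁻¹) l (𝓝 ((π / p) / sin (π / p))) :=
  integral_Ioi_inv_one_add_rpow hp ▸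
    intervalIntegral_tendsto_integral_Ioi 0 (integrableOn_Ioi_inv_one_add_rpow hp) hT

/-- with μ₀(x₁) = −(ακ)^{−1/α}(x₁+x̂₁)^{−1/α}, x̂₁ = (ακ)⁻¹|δ|^{−α}, and
ℓ_ε = ∫_δ^0 ds/(κ|s|^{1+α}+ε), one has
ε / (κ(−μ₀(ℓ_ε))^{1+α}) → [α (π/(α+1))/sin(π/(α+1))]^{(α+1)/α} as ε → 0⁺.
In particular the ratio ε/H₀(μ₀(ℓ_ε)) stays bounded as ε → 0⁺. -/
theorem stmt_19 (κ α δ : ℝ) (hκ : 0 < κ) (hα : 0 < α) (hδ : δ < 0)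
    (xhat : ℝ) (hxhat : xhat = (α * κ)⁻¹ * |δ| ^ (-α))
    (μ₀ : ℝ → ℝ)
    (hμ₀ : ∀ x₁, μ₀ x₁ = -((α * κ) ^ (-(1 / α)) * (x₁ + xhat) ^ (-(1 / α))))
    (ℓ : ℝ → ℝ)
    (hℓ : ∀ ε, 0 < ε → ℓ ε = ∫ s in δ..(0 : ℝ), 1 / (κ * |s| ^ (1 + α) + ε)) :
    Tendsto (fun ε : ℝ => ε / (κ * (-(μ₀ (ℓ ε))) ^ (1 + α))) (nhdsWithin 0 (Ioi 0))
      (nhds ((α * ((π / (α + 1)) / Real.sin (π / (α + 1)))) ^ ((α + 1) / α))) ∧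
    ∃ M : ℝ, ∀ᶠ ε in nhdsWithin (0 : ℝ) (Ioi 0),
      ε / (κ * (-(μ₀ (ℓ ε))) ^ (1 + α)) ≤ M := by
  set p := 1 + α with hp
  set G := fun ε => (∫ t in (0 : ℝ)..(-δ / innerScale κ p ε), (1 + t ^ p)⁻¹)
    + ε / innerScale κ p ε * xhat
  have hp₁ : 1 < p := by linarith
  have hxhat₀ : 0 < xhat :=
    hxhat ▸ mul_pos (inv_pos.2 (mul_pos hα hκ)) (rpow_pos_of_pos (abs_pos.2 hδ.ne) _)
  have hG : Tendsto (fun ε => α * G ε) (𝓝[>] 0) (𝓝 (α * ((π / p) / sin (π / p) + 0 * xhat))) :=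
    ((tendsto_intervalIntegral_inv_one_add_rpow hp₁
      (tendsto_const_div_innerScale_atTop hκ (by positivity) (neg_pos.2 hδ))).add
      ((tendsto_div_innerScale hκ hp₁).mul_const xhat)).const_mul α
  rw [zero_mul, add_zero] at hG
  have hlim : Tendsto (fun ε => ε / (κ * (-(μ₀ (ℓ ε))) ^ p)) (𝓝[>] 0)
      (𝓝 ((α * ((π / p) / sin (π / p))) ^ (p / α))) :=
    ((continuousAt_rpow_const _ (p / α) (Or.inr (by positivity))).tendsto.comp hG).congr'
      (eventually_nhdsWithin_of_forall fun ε (hε : 0 < ε) => by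
        show _ = ε / (κ * (-(μ₀ (ℓ ε))) ^ p)
        rw [hμ₀, neg_neg, hℓ ε hε, div_mul_rpow_integral_add_eq hκ hα hδ.le hε hxhat₀]
        rfl)
  rw [hp, add_comm α 1]
  exact ⟨hlim, _, hlim.eventually (eventually_le_nhds (lt_add_one _))⟩
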